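/- For a word x in Z_m^n chosen uniformly at random, the expected number of maximal alternating segments of x equals 1 + (n-2)(m-1)(m-2)/m^2 + (n-1)/m. -/

import Mathlib

open Finset

/-- The (0-indexed, inclusive) segment `x_i,…,x_j` is alternating, i.e. of the
form `abab…` : adjacent symbols differ and the segment has period 2. -/
def IsAltOn {m : ℕ} (x : ℕ → Fin m) (i j : ℕ) : Prop :=
  (∀ k ∈ Finset.Ico i j, x k ≠ x (k + 1)) ∧ ∀ k ∈ Finset.Ico i (j - 1), x k = x (k + 2)

instance {m : ℕ} (x : ℕ → Fin m) (i j : ℕ) : Decidable (IsAltOn x i j) :=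
  inferInstanceAs (Decidable (_ ∧ _))

/-- The set of (0-indexed, inclusive) index pairs of maximal alternating segments
of the word `x_0,…,x_{n-1}`. -/
def altSegs {m : ℕ} (n : ℕ) (x : ℕ → Fin m) : Finset (ℕ × ℕ) :=
  (Finset.range n ×ˢ Finset.range n).filter (fun p => p.1 ≤ p.2 ∧ IsAltOn x p.1 p.2 ∧
    (p.1 = 0 ∨ ¬ IsAltOn x (p.1 - 1) p.2) ∧ (p.2 = n - 1 ∨ ¬ IsAltOn x p.1 (p.2 + 1)))

/-- `a(x)` : the number of maximal alternating segments of `x_0,…,x_{n-1}`. -/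
def aCount {m : ℕ} (n : ℕ) (x : ℕ → Fin m) : ℕ := (altSegs n x).card

/-- `∑ s_i` : the sum of the lengths of the maximal alternating segments. -/
def sumLen {m : ℕ} (n : ℕ) (x : ℕ → Fin m) : ℕ := ∑ p ∈ altSegs n x, (p.2 - p.1 + 1)

/-- `∑ s_i²` : the sum of the squares of the lengths of the maximal alternating segments. -/
def sumLenSq {m : ℕ} (n : ℕ) (x : ℕ → Fin m) : ℕ := ∑ p ∈ altSegs n x, (p.2 - p.1 + 1) ^ 2

/-- `ρ(x)` : the number of runs of the word `x_0,…,x_{n-1}`. -/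
def rho {m : ℕ} (n : ℕ) (x : ℕ → Fin m) : ℕ :=
  1 + ((Finset.range (n - 1)).filter (fun i => x i ≠ x (i + 1))).card

/-- `h(x)` : the length of the first maximal alternating segment of `x_0,…,x_{n-1}`. -/
def headAlt {m : ℕ} (n : ℕ) (x : ℕ → Fin m) : ℕ :=
  ((Finset.range n).filter (fun j => IsAltOn x 0 j)).card

/-- `t(x)` : the length of the last maximal alternating segment of `x_0,…,x_{n-1}`. -/
def tailAlt {m : ℕ} (n : ℕ) (x : ℕ → Fin m) : ℕ :=
  ((Finset.range n).filter (fun j => IsAltOn x (n - 1 - j) (n - 1))).card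

/-- Extend a word of length `n` to a function `ℕ → Fin m` (junk value `0` beyond `n`). -/
def extWord {m : ℕ} (n : ℕ) (hm : 0 < m) (y : Fin n → Fin m) : ℕ → Fin m :=
  fun i => if h : i < n then y ⟨i, h⟩ else ⟨0, hm⟩

/-- The FLL ball of radius 1 around `x` : all words `y` of length `n` sharing with `x`
a common subsequence of length `n - 1` (equivalently, `d_l(x,y) ≤ 1`). -/
def L1ball {m : ℕ} (n : ℕ) (x : Fin n → Fin m) : Set (Fin n → Fin m) :=
  {y | ∃ z : List (Fin m), z.length = n - 1 ∧ z.Sublist (List.ofFn x) ∧ z.Sublist (List.ofFn y)}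

/-- `|L_1(x)|` : the size of the FLL ball of radius 1 around `x`. -/
noncomputable def L1size {m : ℕ} (n : ℕ) (x : Fin n → Fin m) : ℕ := (L1ball n x).ncard

/-- `f_n(y)` for binary words `y` of length `len` : `ρ(y)·n - (1/2)∑ s_j²`. -/
noncomputable def fB (n len : ℕ) (y : ℕ → Fin 2) : ℝ :=
  (rho len y : ℝ) * n - (sumLenSq len y : ℝ) / 2

/-- `f_{m,n}(y)` for words `y` of length `len` over `Z_m` :
`ρ(y)(mn-n-1) - (1/2)∑ s_j² + (3/2)∑ s_j - a(y)`. -/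
noncomputable def fM (m n len : ℕ) (y : ℕ → Fin m) : ℝ :=
  (rho len y : ℝ) * ((m : ℝ) * n - n - 1) - (sumLenSq len y : ℝ) / 2
    + 3 / 2 * (sumLen len y : ℝ) - (aCount len y : ℝ)

/-!
A maximal alternating segment is determined by its left end, and position `i` is a left end
iff `i = 0`, or `x (i-1) = x i`, or `x (i-1), x i, x (i+1)` are pairwise distinct. Hence
`a(x) = 1 + #{k | x k = x (k+1)} + #{k | x k, x (k+1), x (k+2) pairwise distinct}`, and by
linearity of expectation it suffices that a window of two letters of a uniform word is constant
with probability `1/m` and a window of three letters is injective with probability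
`m(m-1)(m-2)/m³`. Both follow from the fact that the restriction of a uniform word to a set of
positions is uniform.
-/

open Function

theorem Nat.card_subtype_comp_embedding_mul {ι κ α : Type*} [Finite ι] [Finite α] (f : κ ↪ ι)
    (P : (κ → α) → Prop) :
    Nat.card {y : ι → α // P (y ∘ f)} * Nat.card α ^ Nat.card κ
      = Nat.card {z : κ → α // P z} * Nat.card α ^ Nat.card ι := by
  classical
  have : Finite κ := Finite.of_injective f f.injective
  let split : (ι → α) ≃ (κ → α) × ({i // i ∉ Set.range f} → α) :=
    (Equiv.piEquivPiSubtypeProd (· ∈ Set.range f) fun _ => α).trans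
      (Equiv.prodCongr ((Equiv.ofInjective f f.injective).symm.arrowCongr (Equiv.refl α))
        (Equiv.refl _))
  have hsplit : Nat.card {y : ι → α // P (y ∘ f)}
      = Nat.card {z : κ → α // P z} * Nat.card ({i // i ∉ Set.range f} → α) := by
    rw [← Nat.card_prod, ← Nat.card_congr Equiv.prodSubtypeFstEquivSubtypeProd]
    exact Nat.card_congr (split.subtypeEquiv fun y => Iff.rfl)
  have htotal : Nat.card (κ → α) * Nat.card ({i // i ∉ Set.range f} → α) = Nat.card (ι → α) := by
    rw [← Nat.card_prod, Nat.card_congr split]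
  rw [hsplit, mul_assoc, ← Nat.card_fun, mul_comm (Nat.card (_ → α)), htotal, Nat.card_fun]

theorem Fintype.card_injective_comp_embedding_mul {ι κ α : Type*} [Fintype ι] [Fintype κ]
    [Fintype α] [DecidableEq ι] [DecidableEq α] (f : κ ↪ ι) :
    #{y : ι → α | Injective (y ∘ f)} * card α ^ card κ
      = (card α).descFactorial (card κ) * card α ^ card ι := by
  have h := Nat.card_subtype_comp_embedding_mul (α := α) f Injective
  simpa only [Nat.card_congr (Equiv.subtypeInjectiveEquivEmbedding κ α), Nat.card_eq_fintype_card,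
    Fintype.card_subtype, Fintype.card_embedding_eq] using h

theorem Nat.cast_descFactorial_three {S : Type*} [CommRing S] (a : ℕ) :
    (a.descFactorial 3 : S) = a * (a - 1) * (a - 2) := by
  rcases a with _ | _ | a
  · simp
  · simp [Nat.descFactorial_succ]
  · simp [Nat.descFactorial_succ]
    ring

theorem injective_fin_two_iff {β : Sort*} {f : Fin 2 → β} : Injective f ↔ f 0 ≠ f 1 := by
  simp only [Injective, Fin.forall_fin_two]
  grind

theorem injective_fin_three_iff {β : Sort*} {f : Fin 3 → β} :
    Injective f ↔ f 0 ≠ f 1 ∧ f 1 ≠ f 2 ∧ f 0 ≠ f 2 := by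
  simp only [Injective, Fin.forall_fin_succ]
  grind

section AlternatingSegments

variable {m : ℕ} {x : ℕ → Fin m} {n i j : ℕ}

theorem IsAltOn.mono {i' j' : ℕ} (h : IsAltOn x i j) (hi : i ≤ i') (hj : j' ≤ j) :
    IsAltOn x i' j' := by
  refine ⟨fun k hk => h.1 k ?_, fun k hk => h.2 k ?_⟩ <;> simp only [mem_Ico] at * <;> omega

theorem isAltOn_self (x : ℕ → Fin m) (i : ℕ) : IsAltOn x i i := by
  refine ⟨fun k hk => ?_, fun k hk => ?_⟩ <;> simp only [mem_Ico] at hk <;> omega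

theorem isAltOn_iff_of_lt (hij : i < j) :
    IsAltOn x i j ↔ x i ≠ x (i + 1) ∧ (i + 1 < j → x i = x (i + 2)) ∧ IsAltOn x (i + 1) j := by
  constructor
  · rintro ⟨hne, heq⟩
    refine ⟨hne i (by simp only [mem_Ico]; omega), fun h => heq i (by simp only [mem_Ico]; omega),
      fun k hk => hne k ?_, fun k hk => heq k ?_⟩ <;> simp only [mem_Ico] at * <;> omega
  · rintro ⟨hne₀, heq₀, hne, heq⟩
    refine ⟨fun k hk => ?_, fun k hk => ?_⟩ <;> simp only [mem_Ico] at hk <;>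
      obtain rfl | hk' := eq_or_lt_of_le hk.1
    · exact hne₀
    · exact hne k (by simp only [mem_Ico]; omega)
    · exact heq₀ (by omega)
    · exact heq k (by simp only [mem_Ico]; omega)

theorem isAltOn_succ_iff : IsAltOn x i (i + 1) ↔ x i ≠ x (i + 1) := by
  simp [isAltOn_iff_of_lt (Nat.lt_succ_self i), isAltOn_self]

theorem mem_altSegs {p : ℕ × ℕ} :
    p ∈ altSegs n x ↔ p.1 < n ∧ p.2 < n ∧ p.1 ≤ p.2 ∧ IsAltOn x p.1 p.2 ∧
      (p.1 = 0 ∨ ¬IsAltOn x (p.1 - 1) p.2) ∧ (p.2 = n - 1 ∨ ¬IsAltOn x p.1 (p.2 + 1)) := by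
  simp [altSegs, and_assoc]

theorem snd_eq_of_mem_altSegs {j' : ℕ} (h : (i, j) ∈ altSegs n x) (h' : (i, j') ∈ altSegs n x) :
    j = j' := by
  by_contra hne
  wlog hlt : j < j' generalizing j j'
  · exact this h' h (Ne.symm hne) (by omega)
  rw [mem_altSegs] at h h'
  rcases h.2.2.2.2.2 with hj | hj
  · omega
  · exact hj (h'.2.2.2.1.mono le_rfl hlt)

theorem exists_maximal_isAltOn (hi : i < n) :
    ∃ j, i ≤ j ∧ j < n ∧ IsAltOn x i j ∧ (j = n - 1 ∨ ¬IsAltOn x i (j + 1)) := by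
  set j := Nat.findGreatest (IsAltOn x i) (n - 1)
  have hjn : j ≤ n - 1 := Nat.findGreatest_le _
  refine ⟨j, Nat.le_findGreatest (by omega : i ≤ n - 1) (isAltOn_self x i), by omega,
    Nat.findGreatest_spec (by omega : i ≤ n - 1) (isAltOn_self x i), ?_⟩
  by_cases h : j = n - 1
  · exact .inl h
  · exact .inr (Nat.findGreatest_is_greatest (Nat.lt_succ_self j) (by omega : j + 1 ≤ n - 1))

def IsSegStart (n : ℕ) (x : ℕ → Fin m) (i : ℕ) : Prop :=
  i = 0 ∨ x (i - 1) = x i ∨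
    (i + 1 < n ∧ x (i - 1) ≠ x i ∧ x i ≠ x (i + 1) ∧ x (i - 1) ≠ x (i + 1))

instance (n : ℕ) (x : ℕ → Fin m) (i : ℕ) : Decidable (IsSegStart n x i) := by
  unfold IsSegStart; infer_instance

theorem isSegStart_iff (hij : i ≤ j) (hjn : j < n) (halt : IsAltOn x i j)
    (hmax : j = n - 1 ∨ ¬IsAltOn x i (j + 1)) :
    IsSegStart n x i ↔ i = 0 ∨ ¬IsAltOn x (i - 1) j := by
  have hlt : i < j ↔ i + 1 < n ∧ x i ≠ x (i + 1) := by
    refine ⟨fun h => ⟨by omega, halt.1 i (by simp only [mem_Ico]; omega)⟩, fun ⟨hin, hne⟩ => ?_⟩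
    by_contra hle
    obtain rfl : j = i := by omega
    rcases hmax with h | h
    · omega
    · exact h (isAltOn_succ_iff.2 hne)
  cases i with
  | zero => simp [IsSegStart]
  | succ i =>
    rw [Nat.add_sub_cancel, isAltOn_iff_of_lt (by omega)]
    simp only [IsSegStart, hlt, halt]
    tauto

theorem aCount_eq_card_isSegStart : aCount n x = #{i ∈ range n | IsSegStart n x i} := by
  refine card_bij (fun p _ => p.1) ?_ ?_ ?_
  · rintro ⟨i, j⟩ h
    obtain ⟨hi, hj, hij, halt, hleft, hright⟩ := mem_altSegs.1 h
    simpa [hi] using (isSegStart_iff hij hj halt hright).2 hleft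
  · rintro ⟨i, j⟩ h ⟨i', j'⟩ h' (rfl : i = i')
    rw [snd_eq_of_mem_altSegs h h']
  · intro i hi
    obtain ⟨hi, hstart⟩ := mem_filter.1 hi
    obtain ⟨j, hij, hjn, halt, hright⟩ := exists_maximal_isAltOn (mem_range.1 hi)
    exact ⟨(i, j), mem_altSegs.2 ⟨mem_range.1 hi, hjn, hij, halt,
      (isSegStart_iff hij hjn halt hright).1 hstart, hright⟩, rfl⟩

theorem isSegStart_succ_iff (k : ℕ) :
    IsSegStart n x (k + 1) ↔ ¬Injective (fun t : Fin 2 => x (k + t)) ∨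
      (k + 2 < n ∧ Injective fun t : Fin 3 => x (k + t)) := by
  simp [IsSegStart, injective_fin_two_iff, injective_fin_three_iff]

theorem card_isSegStart (hn : 0 < n) :
    #{i ∈ range n | IsSegStart n x i}
      = 1 + #{k ∈ range (n - 1) | ¬Injective fun t : Fin 2 => x (k + t)}
        + #{k ∈ range (n - 2) | Injective fun t : Fin 3 => x (k + t)} := by
  obtain ⟨n, rfl⟩ : ∃ n', n = n' + 1 := ⟨n - 1, by omega⟩
  have hdisj : Disjoint {k ∈ range n | ¬Injective fun t : Fin 2 => x (k + t)}
      {k ∈ range n | k + 2 < n + 1 ∧ Injective fun t : Fin 3 => x (k + t)} := by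
    refine disjoint_filter.2 fun k _ h2 h3 => h2 ?_
    simp_all [injective_fin_two_iff, injective_fin_three_iff]
  have htriple : {k ∈ range n | k + 2 < n + 1 ∧ Injective fun t : Fin 3 => x (k + t)}
      = {k ∈ range (n + 1 - 2) | Injective fun t : Fin 3 => x (k + t)} := by
    ext k
    simp only [mem_filter, mem_range, ← and_assoc]
    exact and_congr_left' ⟨fun _ => by omega, fun _ => ⟨by omega, by omega⟩⟩
  rw [card_filter, sum_range_succ', ← card_filter, if_pos (.inl rfl), add_comm,
    Nat.add_sub_cancel, add_assoc]
  simp only [isSegStart_succ_iff]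
  rw [filter_or, card_union_of_disjoint hdisj, htriple]

end AlternatingSegments

section UniformWords

variable {m n : ℕ} (hm : 0 < m)
include hm

theorem card_injective_extWord_window {k r : ℕ} (hkr : k + r ≤ n) :
    (#{y : Fin n → Fin m | Injective fun t : Fin r => extWord n hm y (k + t)} : ℝ)
      = m.descFactorial r / m ^ r * m ^ n := by
  let window : Fin r ↪ Fin n := (Fin.natAddEmb k).trans (Fin.castLEEmb hkr)
  have hwindow (y : Fin n → Fin m) : (fun t : Fin r => extWord n hm y (k + t)) = y ∘ window :=
    funext fun t => dif_pos (by omega)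
  have h := Fintype.card_injective_comp_embedding_mul (α := Fin m) window
  simp only [Fintype.card_fin] at h
  rw [div_mul_eq_mul_div, eq_div_iff (by positivity)]
  simp only [hwindow]
  exact_mod_cast h

theorem card_not_injective_extWord_pair {k : ℕ} (hkn : k + 2 ≤ n) :
    (#{y : Fin n → Fin m | ¬Injective fun t : Fin 2 => extWord n hm y (k + t)} : ℝ)
      = m ^ n / m := by
  have hsum : (#{y : Fin n → Fin m | Injective fun t : Fin 2 => extWord n hm y (k + t)} : ℝ)
      + #{y : Fin n → Fin m | ¬Injective fun t : Fin 2 => extWord n hm y (k + t)} = m ^ n := by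
    exact_mod_cast (card_filter_add_card_filter_not _).trans (by simp)
  rw [eq_sub_of_add_eq' hsum, card_injective_extWord_window hm hkn, Nat.cast_descFactorial_two]
  field_simp
  ring

theorem card_injective_extWord_triple {k : ℕ} (hkn : k + 3 ≤ n) :
    (#{y : Fin n → Fin m | Injective fun t : Fin 3 => extWord n hm y (k + t)} : ℝ)
      = (m - 1) * (m - 2) / m ^ 2 * m ^ n := by
  rw [card_injective_extWord_window hm hkn, Nat.cast_descFactorial_three]
  field_simp

theorem sum_aCount_extWord (hn : 0 < n) :
    ∑ y : Fin n → Fin m, aCount n (extWord n hm y)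
      = m ^ n + ∑ k ∈ range (n - 1), #{y | ¬Injective fun t : Fin 2 => extWord n hm y (k + t)}
        + ∑ k ∈ range (n - 2), #{y | Injective fun t : Fin 3 => extWord n hm y (k + t)} := by
  simp only [aCount_eq_card_isSegStart, card_isSegStart hn, sum_add_distrib, sum_const, card_univ,
    Fintype.card_fun, Fintype.card_fin, smul_eq_mul, mul_one]
  congr 1
  · congr 1
    exact sum_card_bipartiteAbove_eq_sum_card_bipartiteBelow _
  · exact sum_card_bipartiteAbove_eq_sum_card_bipartiteBelow _

end UniformWords

/-- For a uniformly random `x ∈ Z_m^n`, the expected number of maximal alternating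
segments equals `1 + (n-2)(m-1)(m-2)/m² + (n-1)/m`. -/
theorem stmt4 (n m : ℕ) (hn : 2 ≤ n) (hm : 2 ≤ m) :
    (∑ y : Fin n → Fin m, (aCount n (extWord n (by omega) y) : ℝ)) / (m : ℝ) ^ n
      = 1 + ((n : ℝ) - 2) * ((m : ℝ) - 1) * ((m : ℝ) - 2) / (m : ℝ) ^ 2
          + ((n : ℝ) - 1) / m := by
  have hm₀ : 0 < m := by omega
  rw [← Nat.cast_sum, sum_aCount_extWord hm₀ (by omega)]
  push_cast
  rw [sum_congr rfl fun k hk => card_not_injective_extWord_pair hm₀ (by simp at hk; omega),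
    sum_congr rfl fun k hk => card_injective_extWord_triple hm₀ (by simp at hk; omega)]
  simp only [sum_const, card_range, nsmul_eq_mul, Nat.cast_sub hn, Nat.cast_sub (by omega : 1 ≤ n)]
  field_simp
  ring
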